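/- arXiv:1707.00924 — 6 statements merged into one kernel-verified Lean document; each statement's English description precedes it below -/
import Mathlib

section
/- Invariant region: Let Ω = Ω_h × Ω_v where Ω_h = {(S_h, I_h, R_h) ∈ ℝ₊³ : S_h + I_h + R_h ≤ Λ_h/α_h} and Ω_v = {(S_v, I_v) ∈ ℝ₊² : S_v + I_v ≤ Λ_v/α_v}. If (S_h, I_h, R_h, S_v, I_v) is a differentiable solution of the SIRS malaria system on [0, ∞) whose initial value lies in Ω (with N_h(t) > 0 for all t), then the solution remains in Ω for all t ≥ 0; in particular S_h(t)+I_h(t)+R_h(t) ≤ Λ_h/α_h and S_v(t)+I_v(t) ≤ Λ_v/α_v for all t ≥ 0. -/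
/-!
The orthant is invariant because the vector field is quasi-positive: when `x i ≤ 0`, the
derivative of `x i` is at least `-L` times the total negative part of `x`. On a compact time
interval `L` can be taken uniform, since the solution is bounded there and `N_h` is bounded away
from `0`. Then `V = ∑ i, (x i)⁻ ^ 2` satisfies `V' ≤ K V` and `V 0 = 0`, so Grönwall forces
`V = 0`. Once `I_h ≥ 0`, the totals satisfy `N_h' = Λ_h - α_h N_h - ρ_h I_h ≤ Λ_h - α_h N_h` and
`N_v' = Λ_v - α_v N_v`, and the same comparison argument keeps them below `Λ/α`.
-/

open Set Filter Topology Real Finset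

theorem nonpos_of_hasDerivAt_le_mul {f f' : ℝ → ℝ} {K a b : ℝ}
    (hf : ∀ x ∈ Icc a b, HasDerivAt f (f' x) x) (ha : f a ≤ 0)
    (hf' : ∀ x ∈ Icc a b, f' x ≤ K * f x) : ∀ x ∈ Icc a b, f x ≤ 0 := by
  set g := fun y => exp (-K * y) * f y
  have hg : ∀ x ∈ Icc a b, HasDerivAt g (exp (-K * x) * (f' x - K * f x)) x := fun x hx =>
    (((hasDerivAt_id x).const_mul (-K)).exp.mul (hf x hx)).congr_deriv (by simp only [id]; ring)
  have hanti : AntitoneOn g (Icc a b) :=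
    antitoneOn_of_hasDerivWithinAt_nonpos (convex_Icc a b)
      (fun x hx => (hg x hx).continuousAt.continuousWithinAt)
      (fun x hx => (hg x (interior_subset hx)).hasDerivWithinAt)
      (fun x hx => mul_nonpos_of_nonneg_of_nonpos (exp_pos _).le
        (sub_nonpos.2 (hf' x (interior_subset hx))))
  intro x hx
  have hgx : g x ≤ 0 :=
    (hanti (left_mem_Icc.2 (hx.1.trans hx.2)) hx hx.1).trans
      (mul_nonpos_of_nonneg_of_nonpos (exp_pos _).le ha)
  exact nonpos_of_mul_nonpos_right hgx (exp_pos _)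

theorem hasDerivAt_negPart_sq (x : ℝ) : HasDerivAt (fun y : ℝ => y⁻ ^ 2) (-2 * x⁻) x := by
  rcases lt_trichotomy x 0 with hx | rfl | hx
  · have hloc : (fun y : ℝ => y⁻ ^ 2) =ᶠ[𝓝 x] fun y => y ^ 2 := by
      filter_upwards [Iio_mem_nhds hx] with y hy
      rw [negPart_eq_neg.2 hy.le, neg_sq]
    simpa [negPart_eq_neg.2 hx.le] using (hasDerivAt_pow 2 x).congr_of_eventuallyEq hloc
  · rw [hasDerivAt_iff_isLittleO_nhds_zero]
    simp only [zero_add, negPart_zero, ne_eq, OfNat.ofNat_ne_zero, not_false_eq_true, zero_pow,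
      sub_zero, mul_zero, smul_eq_mul]
    refine Asymptotics.IsBigO.trans_isLittleO ?_ (Asymptotics.isLittleO_pow_id one_lt_two)
    refine Asymptotics.IsBigO.of_bound 1 (Eventually.of_forall fun y => ?_)
    simp only [norm_pow, Real.norm_eq_abs, one_mul]
    have hy : |y⁻| ≤ |y| := by
      rw [abs_of_nonneg (negPart_nonneg y)]
      exact sup_le (neg_le_abs y) (abs_nonneg y)
    exact pow_le_pow_left₀ (abs_nonneg _) hy 2
  · have hloc : (fun y : ℝ => y⁻ ^ 2) =ᶠ[𝓝 x] fun _ => 0 := by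
      filter_upwards [Ioi_mem_nhds hx] with y hy
      simp [negPart_eq_zero.2 (mem_Ioi.1 hy).le]
    simpa [negPart_eq_zero.2 hx.le] using (hasDerivAt_const x (0 : ℝ)).congr_of_eventuallyEq hloc

theorem nonneg_of_quasiPositive {ι : Type*} [Fintype ι] {x x' : ℝ → ι → ℝ} {L a b : ℝ}
    (hL : 0 ≤ L) (hx : ∀ t ∈ Icc a b, HasDerivAt x (x' t) t) (ha : 0 ≤ x a)
    (hqp : ∀ t ∈ Icc a b, ∀ i, x t i ≤ 0 → -L * ∑ j, (x t j)⁻ ≤ x' t i) :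
    ∀ t ∈ Icc a b, 0 ≤ x t := by
  set V := fun t => ∑ i, (x t i)⁻ ^ 2
  have hV : ∀ t ∈ Icc a b, HasDerivAt V (∑ i, -2 * (x t i)⁻ * x' t i) t := fun t ht =>
    HasDerivAt.fun_sum fun i _ => by
      exact (hasDerivAt_negPart_sq (x t i)).comp t (hasDerivAt_pi.1 (hx t ht) i)
  have hV' : ∀ t ∈ Icc a b, ∑ i, -2 * (x t i)⁻ * x' t i ≤ 2 * L * Fintype.card ι * V t := by
    intro t ht
    have hterm : ∀ i, -2 * (x t i)⁻ * x' t i ≤ 2 * L * ((x t i)⁻ * ∑ j, (x t j)⁻) := by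
      intro i
      rcases le_or_gt 0 (x t i) with hi | hi
      · simp [negPart_eq_zero.2 hi]
      · nlinarith [mul_nonneg (negPart_nonneg (x t i)) (sub_nonneg.2 (hqp t ht i hi.le))]
    calc ∑ i, -2 * (x t i)⁻ * x' t i ≤ ∑ i, 2 * L * ((x t i)⁻ * ∑ j, (x t j)⁻) :=
          sum_le_sum fun i _ => hterm i
      _ = 2 * L * (∑ i, (x t i)⁻) ^ 2 := by rw [← mul_sum, ← sum_mul, sq]
      _ ≤ 2 * L * (Fintype.card ι * V t) :=
          mul_le_mul_of_nonneg_left sq_sum_le_card_mul_sum_sq (by positivity)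
      _ = 2 * L * Fintype.card ι * V t := by ring
  have hV0 : V a ≤ 0 := by simp [V, negPart_eq_zero.2 (ha _)]
  intro t ht i
  have hVt : V t = 0 :=
    (nonpos_of_hasDerivAt_le_mul hV hV0 hV' t ht).antisymm (by positivity)
  have := (sum_eq_zero_iff_of_nonneg fun j _ => sq_nonneg (x t j)⁻).1 hVt i (mem_univ i)
  exact negPart_eq_zero.1 (pow_eq_zero_iff two_ne_zero |>.1 this)

theorem neg_mul_negPart_add_le_mul {a b M : ℝ} (ha : |a| ≤ M) (hb : |b| ≤ M) :
    -M * (a⁻ + b⁻) ≤ a * b := by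
  obtain ⟨ha₁, ha₂⟩ := abs_le.1 ha
  obtain ⟨hb₁, hb₂⟩ := abs_le.1 hb
  rcases le_total 0 a with h₁ | h₁ <;> rcases le_total 0 b with h₂ | h₂
  · simp only [negPart_eq_zero.2 h₁, negPart_eq_zero.2 h₂]; nlinarith
  · simp only [negPart_eq_zero.2 h₁, negPart_eq_neg.2 h₂]; nlinarith
  · simp only [negPart_eq_neg.2 h₁, negPart_eq_zero.2 h₂]; nlinarith
  · simp only [negPart_eq_neg.2 h₁, negPart_eq_neg.2 h₂]; nlinarith

theorem neg_mul_negPart_add_le_mul_div {β a b M m N : ℝ} (hβ : 0 ≤ β) (hm : 0 < m) (hmN : m ≤ N)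
    (ha : |a| ≤ M) (hb : |b| ≤ M) : -(β * M / m) * (a⁻ + b⁻) ≤ β * a * b / N := by
  have hc : 0 ≤ β * (M * (a⁻ + b⁻)) :=
    mul_nonneg hβ (mul_nonneg ((abs_nonneg a).trans ha) (by positivity))
  calc -(β * M / m) * (a⁻ + b⁻) = -(β * (M * (a⁻ + b⁻)) / m) := by ring
    _ ≤ -(β * (M * (a⁻ + b⁻)) / N) := neg_le_neg (div_le_div_of_nonneg_left hc hm hmN)
    _ = β * (-M * (a⁻ + b⁻)) / N := by ring
    _ ≤ β * (a * b) / N := div_le_div_of_nonneg_right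
        (mul_le_mul_of_nonneg_left (neg_mul_negPart_add_le_mul ha hb) hβ) (hm.trans_le hmN).le
    _ = β * a * b / N := by ring

section SIRS

variable (Λh αh βh γh ρh ωh Λv αv βv : ℝ)

/-- States are `x = (S_h, I_h, R_h, S_v, I_v)`, so `N_h = x 0 + x 1 + x 2`. -/
noncomputable def sirsField (x : Fin 5 → ℝ) : Fin 5 → ℝ :=
  ![Λh - βh * x 0 * x 4 / (x 0 + x 1 + x 2) + ωh * x 2 - αh * x 0,
    βh * x 0 * x 4 / (x 0 + x 1 + x 2) - (γh + ρh + αh) * x 1,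
    γh * x 1 - (ωh + αh) * x 2,
    Λv - βv * x 3 * x 1 / (x 0 + x 1 + x 2) - αv * x 3,
    βv * x 3 * x 1 / (x 0 + x 1 + x 2) - αv * x 4]

variable {Λh αh βh γh ρh ωh Λv αv βv}

theorem sirsField_quasiPositive (hΛh : 0 ≤ Λh) (hαh : 0 ≤ αh) (hβh : 0 ≤ βh) (hγh : 0 ≤ γh)
    (hρh : 0 ≤ ρh) (hωh : 0 ≤ ωh) (hΛv : 0 ≤ Λv) (hαv : 0 ≤ αv) (hβv : 0 ≤ βv)
    {x : Fin 5 → ℝ} {M m : ℝ} (hm : 0 < m) (hN : m ≤ x 0 + x 1 + x 2) (hM : ‖x‖ ≤ M)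
    (i : Fin 5) (hi : x i ≤ 0) :
    -(ωh + γh + βh * M / m + βv * M / m) * ∑ j, (x j)⁻ ≤
      sirsField Λh αh βh γh ρh ωh Λv αv βv x i := by
  have hx : ∀ j, |x j| ≤ M := fun j => (norm_le_pi_norm x j).trans hM
  have hnx : ∀ j, |-x j| ≤ M := fun j => (abs_neg (x j)).trans_le (hx j)
  have hpart : ∀ j, 0 ≤ (x j)⁻ := fun j => negPart_nonneg (x j)
  have hlow : ∀ j, -(x j)⁻ ≤ x j := fun j => neg_le.1 (neg_le_negPart (x j))
  have hM0 : 0 ≤ M := (abs_nonneg _).trans (hx 0)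
  have hp : 0 ≤ βh * M / m := by positivity
  have hq : 0 ≤ βv * M / m := by positivity
  rw [Fin.sum_univ_five]
  fin_cases i <;>
    simp only [Fin.zero_eta, Fin.mk_one, Fin.reduceFinMk, Fin.isValue, sirsField, Matrix.cons_val,
      Matrix.cons_val_zero, Matrix.cons_val_one] at hi ⊢
  -- on `S ≤ 0` the loss `-β S I / N` is the incidence term for `-S ≥ 0`, and `(-S)⁻ = 0`
  · have h := neg_mul_negPart_add_le_mul_div hβh hm hN (hnx 0) (hx 4)
    simp only [negPart_eq_zero.2 (neg_nonneg.2 hi), zero_add, mul_neg, neg_mul, neg_div] at h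
    nlinarith [hpart 0, hpart 1, hpart 2, hpart 3, hpart 4, hlow 2]
  · have h := neg_mul_negPart_add_le_mul_div hβh hm hN (hx 0) (hx 4)
    nlinarith [hpart 0, hpart 1, hpart 2, hpart 3, hpart 4]
  · nlinarith [hpart 0, hpart 1, hpart 2, hpart 3, hpart 4, hlow 1]
  · have h := neg_mul_negPart_add_le_mul_div hβv hm hN (hnx 3) (hx 1)
    simp only [negPart_eq_zero.2 (neg_nonneg.2 hi), zero_add, mul_neg, neg_mul, neg_div] at h
    nlinarith [hpart 0, hpart 1, hpart 2, hpart 3, hpart 4]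
  · have h := neg_mul_negPart_add_le_mul_div hβv hm hN (hx 3) (hx 1)
    nlinarith [hpart 0, hpart 1, hpart 2, hpart 3, hpart 4]

theorem sirsField_solution_nonneg (hΛh : 0 ≤ Λh) (hαh : 0 ≤ αh) (hβh : 0 ≤ βh) (hγh : 0 ≤ γh)
    (hρh : 0 ≤ ρh) (hωh : 0 ≤ ωh) (hΛv : 0 ≤ Λv) (hαv : 0 ≤ αv) (hβv : 0 ≤ βv)
    {X : ℝ → Fin 5 → ℝ}
    (hX : ∀ t, 0 ≤ t → HasDerivAt X (sirsField Λh αh βh γh ρh ωh Λv αv βv (X t)) t)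
    (hN : ∀ t, 0 ≤ t → 0 < X t 0 + X t 1 + X t 2) (h0 : 0 ≤ X 0) :
    ∀ t, 0 ≤ t → 0 ≤ X t := by
  intro T hT
  have hcont : ContinuousOn X (Icc 0 T) := fun t ht =>
    (hX t ht.1).continuousAt.continuousWithinAt
  obtain ⟨M, hM⟩ := isCompact_Icc.exists_bound_of_continuousOn hcont
  have hM0 : 0 ≤ M := (norm_nonneg _).trans (hM 0 ⟨le_rfl, hT⟩)
  obtain ⟨s, hs, hmin⟩ := isCompact_Icc.exists_isMinOn (nonempty_Icc.2 hT)
    (f := fun t => X t 0 + X t 1 + X t 2) (by fun_prop)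
  have hm := hN s hs.1
  refine nonneg_of_quasiPositive ?_ (fun t ht => hX t ht.1) h0
    (fun t ht i hi => sirsField_quasiPositive hΛh hαh hβh hγh hρh hωh hΛv hαv hβv hm
      (hmin ht) (hM t ht) i hi) T ⟨hT, le_rfl⟩
  positivity

end SIRS

theorem le_div_of_hasDerivAt_le_sub_mul {f f' : ℝ → ℝ} {Λ α : ℝ} (hα : 0 < α)
    (hf : ∀ t, 0 ≤ t → HasDerivAt f (f' t) t) (hf' : ∀ t, 0 ≤ t → f' t ≤ Λ - α * f t)
    (h0 : f 0 ≤ Λ / α) : ∀ t, 0 ≤ t → f t ≤ Λ / α := by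
  intro T hT
  have hbound : ∀ t ∈ Icc 0 T, f' t ≤ -α * (f t - Λ / α) := fun t ht => by
    rw [mul_sub, neg_mul, neg_mul, mul_div_cancel₀ _ hα.ne']
    linarith [hf' t ht.1]
  exact sub_nonpos.1 (nonpos_of_hasDerivAt_le_mul (fun t ht => (hf t ht.1).sub_const (Λ / α))
    (sub_nonpos.2 h0) hbound T ⟨hT, le_rfl⟩)

/-- Invariant region: if a differentiable solution of the SIRS malaria system starts in
`Ω = Ω_h × Ω_v`, where `Ω_h = {(S_h,I_h,R_h) ∈ ℝ₊³ : S_h+I_h+R_h ≤ Λ_h/α_h}` and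
`Ω_v = {(S_v,I_v) ∈ ℝ₊² : S_v+I_v ≤ Λ_v/α_v}`, then it remains in `Ω` for all `t ≥ 0`. -/
theorem sirs_malaria_invariant_region
    (Λh αh βh γh ρh ωh Λv αv βv : ℝ)
    (hΛh : 0 < Λh) (hαh : 0 < αh) (hβh : 0 < βh) (hγh : 0 < γh) (hρh : 0 < ρh)
    (hωh : 0 < ωh) (hΛv : 0 < Λv) (hαv : 0 < αv) (hβv : 0 < βv)
    (Sh Ih Rh Sv Iv Nh : ℝ → ℝ)
    (hNh : ∀ t, Nh t = Sh t + Ih t + Rh t)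
    (hNhpos : ∀ t, 0 ≤ t → 0 < Nh t)
    (hSh : ∀ t, 0 ≤ t →
      HasDerivAt Sh (Λh - βh * Sh t * Iv t / Nh t + ωh * Rh t - αh * Sh t) t)
    (hIh : ∀ t, 0 ≤ t →
      HasDerivAt Ih (βh * Sh t * Iv t / Nh t - (γh + ρh + αh) * Ih t) t)
    (hRh : ∀ t, 0 ≤ t →
      HasDerivAt Rh (γh * Ih t - (ωh + αh) * Rh t) t)
    (hSv : ∀ t, 0 ≤ t →
      HasDerivAt Sv (Λv - βv * Sv t * Ih t / Nh t - αv * Sv t) t)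
    (hIv : ∀ t, 0 ≤ t →
      HasDerivAt Iv (βv * Sv t * Ih t / Nh t - αv * Iv t) t)
    -- initial value lies in Ω = Ω_h × Ω_v
    (hSh0 : 0 ≤ Sh 0) (hIh0 : 0 ≤ Ih 0) (hRh0 : 0 ≤ Rh 0)
    (hSv0 : 0 ≤ Sv 0) (hIv0 : 0 ≤ Iv 0)
    (hΩh0 : Sh 0 + Ih 0 + Rh 0 ≤ Λh / αh)
    (hΩv0 : Sv 0 + Iv 0 ≤ Λv / αv) :
    ∀ t, 0 ≤ t →
      (0 ≤ Sh t ∧ 0 ≤ Ih t ∧ 0 ≤ Rh t ∧ Sh t + Ih t + Rh t ≤ Λh / αh) ∧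
      (0 ≤ Sv t ∧ 0 ≤ Iv t ∧ Sv t + Iv t ≤ Λv / αv) := by
  set X : ℝ → Fin 5 → ℝ := fun t => ![Sh t, Ih t, Rh t, Sv t, Iv t]
  have hX : ∀ t, 0 ≤ t → HasDerivAt X (sirsField Λh αh βh γh ρh ωh Λv αv βv (X t)) t := by
    intro t ht
    refine hasDerivAt_pi.2 fun i => ?_
    fin_cases i <;>
      simp only [Fin.zero_eta, Fin.mk_one, Fin.reduceFinMk, Fin.isValue, Matrix.cons_val,
        Matrix.cons_val_zero, Matrix.cons_val_one, sirsField, ← hNh, X]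
    exacts [hSh t ht, hIh t ht, hRh t ht, hSv t ht, hIv t ht]
  have hpos := sirsField_solution_nonneg hΛh.le hαh.le hβh.le hγh.le hρh.le hωh.le hΛv.le hαv.le
    hβv.le hX (fun t ht => by simpa [X, hNh] using hNhpos t ht)
    (fun i => by fin_cases i; exacts [hSh0, hIh0, hRh0, hSv0, hIv0])
  have hhost := le_div_of_hasDerivAt_le_sub_mul (f := fun t => Sh t + Ih t + Rh t) hαh
    (fun t ht => ((hSh t ht).add (hIh t ht)).add (hRh t ht))
    (fun t ht => by
      have hI : 0 ≤ Ih t := hpos t ht 1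
      linarith [mul_nonneg hρh.le hI]) hΩh0
  have hvec := le_div_of_hasDerivAt_le_sub_mul (f := fun t => Sv t + Iv t) hαv
    (fun t ht => (hSv t ht).add (hIv t ht)) (fun t ht => by linarith) hΩv0
  intro t ht
  have h := hpos t ht
  exact ⟨⟨h 0, h 1, h 2, hhost t ht⟩, h 3, h 4, hvec t ht⟩
end

section
/- Characteristic polynomial factorization at the disease-free equilibrium: Let J(E_0) be the real 5×5 matrix with rows [−α_h, 0, ω_h, 0, −β_h], [0, −k, 0, 0, β_h], [0, γ_h, −(α_h + ω_h), 0, 0], [0, −β_v Λ_v α_h/(α_v Λ_h), 0, −α_v, 0], [0, β_v Λ_v α_h/(α_v Λ_h), 0, 0, −α_v], where k = γ_h + ρ_h + α_h. Then the characteristic polynomial of J(E_0) equals (λ + α_h)(λ + α_v)(λ + α_h + ω_h)(λ² + (k + α_v) λ + α_v k (1 − R_0²)), where R_0² = β_h β_v Λ_v α_h / (Λ_h α_v² k). -/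
/-!
In the coordinates `(S_h, I_h, R_h, S_v, I_v)`, the columns of `S_h`, `S_v` and `R_h` in
`J(E₀)` each have their only nonzero entry on the diagonal, so Laplace expansion along them
splits off the factors `λ + α_h`, `λ + α_v`, `λ + α_h + ω_h`. What remains is the `2 × 2`
infection block of `(I_h, I_v)`, with trace `-(k + α_v)` and determinant
`k α_v - β_h β_v Λ_v α_h / (α_v Λ_h)`, which is `α_v k (1 - R₀²)`.
-/

open Polynomial

namespace Matrix

variable {R : Type*} [CommRing R]

lemma charmatrix_submatrix {m n : Type*} [DecidableEq m] [DecidableEq n] [Fintype m]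
    [Fintype n] (M : Matrix n n R) {e : m → n} (he : Function.Injective e) :
    (M.submatrix e e).charmatrix = M.charmatrix.submatrix e e := by
  ext i j : 1
  simp [charmatrix_apply, diagonal_apply, he.eq_iff]

lemma charpoly_eq_mul_of_column_eq_zero {n : ℕ} {M : Matrix (Fin (n + 1)) (Fin (n + 1)) R}
    {j : Fin (n + 1)} (a : R) (N : Matrix (Fin n) (Fin n) R) (hj : ∀ i, i ≠ j → M i j = 0)
    (ha : M j j = a) (hN : M.submatrix j.succAbove j.succAbove = N) :
    M.charpoly = (X - C a) * N.charpoly := by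
  rw [charpoly, det_succ_column _ j, Finset.sum_eq_single j, ← Nat.two_mul, pow_mul,
    neg_one_sq, one_pow, one_mul, charmatrix_apply_eq,
    ← charmatrix_submatrix _ Fin.succAbove_right_injective, hN, ha, charpoly]
  · intro i _ hij
    rw [charmatrix_apply_ne _ _ _ hij, hj i hij, C_0, neg_zero, mul_zero, zero_mul]
  · simp

lemma charpoly_fin_two_of (a b c d : R) :
    (!![a, b; c, d]).charpoly = X ^ 2 - C (a + d) * X + C (a * d - b * c) := by
  rw [charpoly, det_fin_two, charmatrix_apply_eq, charmatrix_apply_eq,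
    charmatrix_apply_ne _ _ _ (by decide), charmatrix_apply_ne _ _ _ (by decide)]
  simp only [of_apply, cons_val', cons_val_zero, cons_val_one, empty_val', cons_val_fin_one,
    map_add, map_sub, map_mul]
  ring

end Matrix

theorem charpoly_sirs_dfe_jacobian {R : Type*} [CommRing R] (αh ωh βh k γh q αv : R) :
    (!![-αh, 0, ωh, 0, -βh;
        0, -k, 0, 0, βh;
        0, γh, -(αh + ωh), 0, 0;
        0, -q, 0, -αv, 0;
        0, q, 0, 0, -αv]).charpoly =
      (X + C αh) * (X + C αv) * (X + C (αh + ωh)) *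
        (X ^ 2 + C (k + αv) * X + C (k * αv - βh * q)) := by
  rw [Matrix.charpoly_eq_mul_of_column_eq_zero (j := 0) (-αh)
      !![-k, 0, 0, βh; γh, -(αh + ωh), 0, 0; -q, 0, -αv, 0; q, 0, 0, -αv]
      (fun i hi => by fin_cases i <;> simp_all) rfl
      (by ext i j; fin_cases i <;> fin_cases j <;> rfl),
    Matrix.charpoly_eq_mul_of_column_eq_zero (j := 2) (-αv)
      !![-k, 0, βh; γh, -(αh + ωh), 0; q, 0, -αv]
      (fun i hi => by fin_cases i <;> simp_all) rfl
      (by ext i j; fin_cases i <;> fin_cases j <;> rfl),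
    Matrix.charpoly_eq_mul_of_column_eq_zero (j := 1) (-(αh + ωh)) !![-k, βh; q, -αv]
      (fun i hi => by fin_cases i <;> simp_all) rfl
      (by ext i j; fin_cases i <;> fin_cases j <;> rfl),
    Matrix.charpoly_fin_two_of]
  simp only [map_add, map_sub, map_mul, map_neg]
  ring

theorem sirs_malaria_charpoly_at_dfe_general
    (Λh αh βh γh ρh ωh Λv αv βv k R0sq : ℝ)
    (hαh : 0 < αh) (hγh : 0 < γh) (hρh : 0 < ρh)
    (hαv : 0 < αv)
    (hk : k = γh + ρh + αh)
    (hR0sq : R0sq = βh * βv * Λv * αh / (Λh * αv ^ 2 * k))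
    (J : Matrix (Fin 5) (Fin 5) ℝ)
    (hJ : J = !![-αh, 0, ωh, 0, -βh;
                 0, -k, 0, 0, βh;
                 0, γh, -(αh + ωh), 0, 0;
                 0, -(βv * Λv * αh / (αv * Λh)), 0, -αv, 0;
                 0, βv * Λv * αh / (αv * Λh), 0, 0, -αv]) :
    J.charpoly =
      (X + C αh) * (X + C αv) * (X + C (αh + ωh)) *
        (X ^ 2 + C (k + αv) * X + C (αv * k * (1 - R0sq))) := by
  have hk0 : k ≠ 0 := by rw [hk]; positivity
  have hdet : αv * k * (1 - R0sq) = k * αv - βh * (βv * Λv * αh / (αv * Λh)) := by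
    rw [hR0sq]
    field_simp
  rw [hJ, charpoly_sirs_dfe_jacobian, hdet]

/-- Characteristic polynomial factorization of the Jacobian of the SIRS malaria model at
the disease-free equilibrium. -/
theorem sirs_malaria_charpoly_at_dfe
    (Λh αh βh γh ρh ωh Λv αv βv k R0sq : ℝ)
    (hΛh : 0 < Λh) (hαh : 0 < αh) (hβh : 0 < βh) (hγh : 0 < γh) (hρh : 0 < ρh)
    (hωh : 0 < ωh) (hΛv : 0 < Λv) (hαv : 0 < αv) (hβv : 0 < βv)
    (hk : k = γh + ρh + αh)
    (hR0sq : R0sq = βh * βv * Λv * αh / (Λh * αv ^ 2 * k))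
    (J : Matrix (Fin 5) (Fin 5) ℝ)
    (hJ : J = !![-αh, 0, ωh, 0, -βh;
                 0, -k, 0, 0, βh;
                 0, γh, -(αh + ωh), 0, 0;
                 0, -(βv * Λv * αh / (αv * Λh)), 0, -αv, 0;
                 0, βv * Λv * αh / (αv * Λh), 0, 0, -αv]) :
    J.charpoly =
      (X + C αh) * (X + C αv) * (X + C (αh + ωh)) *
        (X ^ 2 + C (k + αv) * X + C (αv * k * (1 - R0sq))) :=
  sirs_malaria_charpoly_at_dfe_general Λh αh βh γh ρh ωh Λv αv βv k R0sq hαh hγh hρh hαv hk hR0sq J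
    hJ
end

section
/- Local asymptotic stability of the disease-free equilibrium: Let J(E_0) be the real 5×5 matrix with rows [−α_h, 0, ω_h, 0, −β_h], [0, −(γ_h + ρ_h + α_h), 0, 0, β_h], [0, γ_h, −(α_h + ω_h), 0, 0], [0, −β_v Λ_v α_h/(α_v Λ_h), 0, −α_v, 0], [0, β_v Λ_v α_h/(α_v Λ_h), 0, 0, −α_v], with all parameters strictly positive. If R_0 = sqrt(β_h β_v Λ_v α_h / (Λ_h α_v² (γ_h + ρ_h + α_h))) < 1, then every complex eigenvalue of J(E_0) has strictly negative real part. -/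
set_option maxRecDepth 20000

set_option maxRecDepth 10000 in
private lemma det5_aux (a b c d e f g v z : ℂ) :
    (!![z+a, 0, f, 0, e;
        0, z+b, 0, 0, -e;
        0, -c, z+d, 0, 0;
        0, g, 0, z+v, 0;
        0, -g, 0, 0, z+v] : Matrix (Fin 5) (Fin 5) ℂ).det
      = (z+a)*(z+d)*(z+v)*((z+b)*(z+v) - e*g) := by
  simp (config := { decide := true }) [Matrix.det_succ_row_zero, Fin.sum_univ_succ,
    Fin.succAbove, Fin.castSucc, Fin.castAdd, Fin.castLE]
  ring

private lemma quad_root_re_neg (b c : ℝ) (hb : 0 < b) (hc : 0 < c) (z : ℂ)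
    (h : z^2 + (b:ℂ)*z + (c:ℂ) = 0) : z.re < 0 := by
  set x := z.re with hx
  set y := z.im with hy
  have hre : x^2 - y^2 + b*x + c = 0 := by
    have := congrArg Complex.re h
    simp [pow_two, Complex.mul_re, Complex.add_re] at this
    linarith [this]
  have him : y * (2*x + b) = 0 := by
    have := congrArg Complex.im h
    simp [pow_two, Complex.mul_im, Complex.add_im] at this
    linarith [this]
  rcases mul_eq_zero.mp him with h0 | h0
  · rw [h0] at hre
    by_contra hxx
    push_neg at hxx
    nlinarith
  · linarith

/-- Local asymptotic stability of the disease-free equilibrium: if `R_0 < 1` then every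
complex eigenvalue of the Jacobian `J(E_0)` has strictly negative real part. -/
theorem sirs_malaria_dfe_locally_stable
    (Λh αh βh γh ρh ωh Λv αv βv R0 : ℝ)
    (hΛh : 0 < Λh) (hαh : 0 < αh) (hβh : 0 < βh) (hγh : 0 < γh) (hρh : 0 < ρh)
    (hωh : 0 < ωh) (hΛv : 0 < Λv) (hαv : 0 < αv) (hβv : 0 < βv)
    (hR0 : R0 = Real.sqrt (βh * βv * Λv * αh / (Λh * αv ^ 2 * (γh + ρh + αh))))
    (hR0lt : R0 < 1)
    (J : Matrix (Fin 5) (Fin 5) ℝ)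
    (hJ : J = !![-αh, 0, ωh, 0, -βh;
                 0, -(γh + ρh + αh), 0, 0, βh;
                 0, γh, -(αh + ωh), 0, 0;
                 0, -(βv * Λv * αh / (αv * Λh)), 0, -αv, 0;
                 0, βv * Λv * αh / (αv * Λh), 0, 0, -αv]) :
    ∀ z ∈ spectrum ℂ (J.map (algebraMap ℝ ℂ)), z.re < 0 := by
  intro z hz
  set a : ℝ := γh + ρh + αh with ha
  set k : ℝ := βv * Λv * αh / (αv * Λh) with hk
  have hapos : 0 < a := by positivity
  have hkpos : 0 < k := by positivity
  -- key inequality from R0 < 1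
  have hck : βh * k < a * αv := by
    set t : ℝ := βh * βv * Λv * αh / (Λh * αv ^ 2 * a) with hts
    have htpos : 0 < t := by positivity
    have hsq : Real.sqrt t ^ 2 = t := Real.sq_sqrt htpos.le
    have ht1 : t < 1 := by
      rw [hR0] at hR0lt
      nlinarith [Real.sqrt_nonneg t]
    have h2 : βh * βv * Λv * αh < Λh * αv ^ 2 * a := by
      have hden : 0 < Λh * αv ^ 2 * a := by positivity
      rw [hts, div_lt_one hden] at ht1
      exact ht1
    rw [hk]
    rw [mul_div_assoc', div_lt_iff₀ (by positivity)]
    nlinarith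
  -- determinant condition from spectrum membership
  have hdet : (z • (1 : Matrix (Fin 5) (Fin 5) ℂ) - J.map (algebraMap ℝ ℂ)).det = 0 := by
    rw [spectrum.mem_iff, Matrix.isUnit_iff_isUnit_det, isUnit_iff_ne_zero, not_not] at hz
    rwa [Algebra.algebraMap_eq_smul_one] at hz
  have hmat : z • (1 : Matrix (Fin 5) (Fin 5) ℂ) - J.map (algebraMap ℝ ℂ)
      = !![z+(αh:ℂ), 0, (-ωh:ℝ), 0, (βh:ℂ);
           0, z+(a:ℂ), 0, 0, -(βh:ℂ);
           0, -(γh:ℂ), z+((αh:ℂ)+(ωh:ℂ)), 0, 0;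
           0, (k:ℂ), 0, z+(αv:ℂ), 0;
           0, -(k:ℂ), 0, 0, z+(αv:ℂ)] := by
    subst hJ
    ext i j
    fin_cases i <;> fin_cases j <;>
      simp [Matrix.smul_apply, Matrix.one_apply, Matrix.sub_apply, Matrix.map_apply,
        Matrix.vecHead, Matrix.vecTail, ← ha, ← hk] <;> push_cast <;> ring_nf
  rw [hmat, det5_aux] at hdet
  rcases mul_eq_zero.mp hdet with h | h
  · rcases mul_eq_zero.mp h with h | h
    · rcases mul_eq_zero.mp h with h | h
      · have : z = -(αh : ℂ) := by linear_combination h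
        rw [this]
        simpa using hαh
      · have : z = -((αh : ℂ) + (ωh : ℂ)) := by linear_combination h
        rw [this]
        simp only [Complex.neg_re, Complex.add_re, Complex.ofReal_re]
        linarith
    · have : z = -(αv : ℂ) := by linear_combination h
      rw [this]
      simpa using hαv
  · have hq : z^2 + ((a + αv : ℝ) : ℂ)*z + ((a * αv - βh * k : ℝ) : ℂ) = 0 := by
      push_cast
      linear_combination h
    exact quad_root_re_neg (a + αv) (a * αv - βh * k) (by positivity) (by linarith) z hq
end

section
/- Lyapunov derivative estimate: Let (S_h, I_h, R_h, S_v, I_v) be a differentiable solution of the SIRS malaria system with nonnegative components, S_h(t) ≤ N_h(t), S_v(t) ≤ Λ_v/α_v and N_h(t) ≥ Λ_h/(α_h + ρ_h) for all t ≥ 0, where N_h = S_h + I_h + R_h. Define the Lyapunov function L(t) = (α_v/β_h) I_h(t) + I_v(t). Then for all t ≥ 0, L'(t) ≤ (β_v Λ_v (α_h + ρ_h)/(α_v Λ_h) − (α_v/β_h)(γ_h + ρ_h + α_h)) · I_h(t). In particular, if β_h β_v Λ_v (α_h + ρ_h) < α_v² Λ_h (γ_h + ρ_h + α_h) then L'(t)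 ≤ 0, with L'(t) = 0 whenever I_h(t) = 0 and S_h(t) = N_h(t). -/
/-- Lyapunov derivative estimate for `L = (α_v/β_h) I_h + I_v` along solutions of the
SIRS malaria system. -/
theorem sirs_malaria_lyapunov_derivative_estimate
    (Λh αh βh γh ρh ωh Λv αv βv : ℝ)
    (hΛh : 0 < Λh) (hαh : 0 < αh) (hβh : 0 < βh) (hγh : 0 < γh) (hρh : 0 < ρh)
    (hωh : 0 < ωh) (hΛv : 0 < Λv) (hαv : 0 < αv) (hβv : 0 < βv)
    (Sh Ih Rh Sv Iv Nh : ℝ → ℝ)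
    (hNh : ∀ t, Nh t = Sh t + Ih t + Rh t)
    (hSh : ∀ t, 0 ≤ t →
      HasDerivAt Sh (Λh - βh * Sh t * Iv t / Nh t + ωh * Rh t - αh * Sh t) t)
    (hIh : ∀ t, 0 ≤ t →
      HasDerivAt Ih (βh * Sh t * Iv t / Nh t - (γh + ρh + αh) * Ih t) t)
    (hRh : ∀ t, 0 ≤ t →
      HasDerivAt Rh (γh * Ih t - (ωh + αh) * Rh t) t)
    (hSv : ∀ t, 0 ≤ t →
      HasDerivAt Sv (Λv - βv * Sv t * Ih t / Nh t - αv * Sv t) t)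
    (hIv : ∀ t, 0 ≤ t →
      HasDerivAt Iv (βv * Sv t * Ih t / Nh t - αv * Iv t) t)
    -- nonnegativity and bounds
    (hpos : ∀ t, 0 ≤ t → 0 ≤ Sh t ∧ 0 ≤ Ih t ∧ 0 ≤ Rh t ∧ 0 ≤ Sv t ∧ 0 ≤ Iv t)
    (hShN : ∀ t, 0 ≤ t → Sh t ≤ Nh t)
    (hSvB : ∀ t, 0 ≤ t → Sv t ≤ Λv / αv)
    (hNhB : ∀ t, 0 ≤ t → Λh / (αh + ρh) ≤ Nh t)
    -- the Lyapunov function and its derivative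
    (L DL : ℝ → ℝ)
    (hL : ∀ t, L t = (αv / βh) * Ih t + Iv t)
    (hDL : ∀ t, 0 ≤ t → HasDerivAt L (DL t) t) :
    ∀ t, 0 ≤ t →
      DL t ≤ (βv * Λv * (αh + ρh) / (αv * Λh) - (αv / βh) * (γh + ρh + αh)) * Ih t ∧
      (βh * βv * Λv * (αh + ρh) < αv ^ 2 * Λh * (γh + ρh + αh) → DL t ≤ 0) ∧
      (Ih t = 0 ∧ Sh t = Nh t → DL t = 0) := by

  intro t ht
  obtain ⟨hSh0, hIh0, hRh0, hSv0, hIv0⟩ := hpos t ht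
  have hαρ : 0 < αh + ρh := by linarith
  have hn : 0 < Nh t := lt_of_lt_of_le (div_pos hΛh hαρ) (hNhB t ht)
  have hΛn : Λh ≤ Nh t * (αh + ρh) := (div_le_iff₀ hαρ).mp (hNhB t ht)
  have hSvα : Sv t * αv ≤ Λv := (le_div_iff₀ hαv).mp (hSvB t ht)
  have hD : 0 < αv * Λh := mul_pos hαv hΛh
  -- identify DL
  have hLfun : L = fun t => (αv / βh) * Ih t + Iv t := funext hL
  have hd : DL t = (αv / βh) * (βh * Sh t * Iv t / Nh t - (γh + ρh + αh) * Ih t)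
      + (βv * Sv t * Ih t / Nh t - αv * Iv t) := by
    refine (hDL t ht).unique ?_
    rw [hLfun]
    exact ((hIh t ht).const_mul (αv / βh)).add (hIv t ht)
  have hDLeq : DL t = αv * Sh t * Iv t / Nh t + βv * Sv t * Ih t / Nh t
      - (αv / βh) * (γh + ρh + αh) * Ih t - αv * Iv t := by
    rw [hd]; field_simp; ring
  have hX : αv * Sh t * Iv t / Nh t ≤ αv * Iv t := by
    rw [div_le_iff₀ hn]
    nlinarith [mul_le_mul_of_nonneg_right (hShN t ht) (mul_nonneg hαv.le hIv0)]
  have hY : βv * Sv t * Ih t / Nh t ≤ βv * Λv * (αh + ρh) / (αv * Λh) * Ih t := by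
    rw [div_mul_eq_mul_div, div_le_div_iff₀ hn hD]
    have p1 : βv * Ih t * Λh * (Sv t * αv) ≤ βv * Ih t * Λh * Λv :=
      mul_le_mul_of_nonneg_left hSvα (by positivity)
    have p2 : βv * (Ih t * Λv) * Λh ≤ βv * (Ih t * Λv) * (Nh t * (αh + ρh)) :=
      mul_le_mul_of_nonneg_left hΛn (by positivity)
    nlinarith [p1, p2]
  have main : DL t ≤ (βv * Λv * (αh + ρh) / (αv * Λh) - (αv / βh) * (γh + ρh + αh)) * Ih t := by
    rw [hDLeq]; nlinarith [hX, hY]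
  refine ⟨main, ?_, ?_⟩
  · intro hlt
    have hc : βv * Λv * (αh + ρh) / (αv * Λh) ≤ (αv / βh) * (γh + ρh + αh) := by
      rw [mul_comm (αv / βh), mul_div_assoc' (γh + ρh + αh), div_le_div_iff₀ hD hβh]
      nlinarith
    linarith [main, mul_nonneg (sub_nonneg.mpr hc) hIh0]
  · rintro ⟨hI0, hSN⟩
    rw [hDLeq, hI0, hSN]
    field_simp
    ring
end

section
/- Spectrum of the Jacobian at the bifurcation point: Let k = γ_h + ρ_h + α_h, d = β_v Λ_v α_h/(α_v Λ_h), β_h = β_h* := Λ_h α_v² k/(β_v Λ_v α_h), and let J* be the real 5×5 matrix with rows [−α_h, 0, ω_h, 0, −β_h], [0, −k, 0, 0, β_h], [0, γ_h, −(α_h+ω_h), 0, 0], [0, −d, 0, −α_v, 0], [0, d, 0, 0, −α_v]. Then the characteristic polynomial of J* equals λ(λ + k + α_v)(λ + α_h)(λ + α_v)(λ + α_h + ω_h); in particular 0 is a simple eigenvalue of J* and all other eigenvalues of J* are real and strictly negative. -/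
/-!
Expanding `det (X - J*)` successively along the `S_h`, `S_v` and `R_h` columns splits off the
factors `X + α_h`, `X + α_v` and `X + α_h + ω_h`, leaving the `2 × 2` block of the infected
compartments `I_h`, `I_v`, with characteristic polynomial `(X + k)(X + α_v) - d β_h`. The
bifurcation value `β_h*` is exactly the one for which `d β_h = k α_v`, so this quadratic
becomes `X (X + k + α_v)`. Every root other than `0` is then minus a positive rate.
-/

open Polynomial

theorem sirs_jacobian_charpoly (a b c g d p β : ℝ) :
    (!![-a, 0, c, 0, -β;
        0, -b, 0, 0, β;
        0, g, -(a + c), 0, 0;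
        0, -d, 0, -p, 0;
        0, d, 0, 0, -p] : Matrix (Fin 5) (Fin 5) ℝ).charpoly =
      (X + C a) * (X + C p) * (X + C (a + c)) * ((X + C b) * (X + C p) - C (d * β)) := by
  rw [Matrix.charpoly, Matrix.det_succ_column_zero]
  simp [Fin.sum_univ_succ, Matrix.det_succ_column_zero, Matrix.charmatrix_apply, Fin.succAbove]
  ring

theorem rootMultiplicity_zero_X_mul {R : Type*} [CommRing R] [IsDomain R] {p : R[X]}
    (hp : p.eval 0 ≠ 0) : (X * p).rootMultiplicity 0 = 1 := by
  have hp0 : p ≠ 0 := fun h => hp (by simp [h])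
  rw [rootMultiplicity_mul (mul_ne_zero X_ne_zero hp0), rootMultiplicity_eq_zero hp,
    ← sub_zero X, ← C_0, rootMultiplicity_X_sub_C_self]

theorem Complex.im_eq_zero_and_re_neg_of_add_ofReal_eq_zero {z : ℂ} {r : ℝ} (hr : 0 < r)
    (h : z + r = 0) : z.im = 0 ∧ z.re < 0 := by
  rw [eq_neg_of_add_eq_zero_left h]
  simpa using hr

/-- Spectrum of the Jacobian at the bifurcation point: the characteristic polynomial of
`J*` equals `λ(λ + k + α_v)(λ + α_h)(λ + α_v)(λ + α_h + ω_h)`; in particular `0` is a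
simple eigenvalue and all other eigenvalues are real and strictly negative. -/
theorem sirs_malaria_bifurcation_spectrum
    (Λh αh γh ρh ωh Λv αv βv βh k d : ℝ)
    (hΛh : 0 < Λh) (hαh : 0 < αh) (hγh : 0 < γh) (hρh : 0 < ρh) (hωh : 0 < ωh)
    (hΛv : 0 < Λv) (hαv : 0 < αv) (hβv : 0 < βv)
    (hk : k = γh + ρh + αh)
    (hd : d = βv * Λv * αh / (αv * Λh))
    (hβh : βh = Λh * αv ^ 2 * k / (βv * Λv * αh))
    (J : Matrix (Fin 5) (Fin 5) ℝ)
    (hJ : J = !![-αh, 0, ωh, 0, -βh;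
                 0, -k, 0, 0, βh;
                 0, γh, -(αh + ωh), 0, 0;
                 0, -d, 0, -αv, 0;
                 0, d, 0, 0, -αv]) :
    J.charpoly =
        X * (X + C (k + αv)) * (X + C αh) * (X + C αv) * (X + C (αh + ωh)) ∧
      J.charpoly.rootMultiplicity 0 = 1 ∧
      ∀ z ∈ spectrum ℂ (J.map (algebraMap ℝ ℂ)), z ≠ 0 → z.im = 0 ∧ z.re < 0 := by
  have hk0 : 0 < k := by rw [hk]; positivity
  have hthreshold : d * βh = k * αv := by
    rw [hd, hβh]
    field_simp
  have hcp : J.charpoly =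
      X * (X + C (k + αv)) * (X + C αh) * (X + C αv) * (X + C (αh + ωh)) := by
    rw [hJ, sirs_jacobian_charpoly, hthreshold]
    simp only [C_mul, C_add]
    ring
  refine ⟨hcp, ?_, fun z hz hz0 => ?_⟩
  · rw [hcp]
    simp only [mul_assoc]
    apply rootMultiplicity_zero_X_mul
    simp only [eval_mul, eval_add, eval_X, eval_C, zero_add]
    positivity
  · rw [Matrix.mem_spectrum_iff_isRoot_charpoly, Matrix.charpoly_map, hcp, IsRoot] at hz
    simp only [Polynomial.map_mul, Polynomial.map_add, Polynomial.map_X, Polynomial.map_C,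
      eval_mul, eval_add, eval_X, eval_C, Complex.coe_algebraMap, mul_eq_zero] at hz
    rcases hz with (((h | h) | h) | h) | h
    · exact absurd h hz0
    all_goals
      exact Complex.im_eq_zero_and_re_neg_of_add_ofReal_eq_zero (by positivity) h
end

section
/- Suppose all parameters are strictly positive and β_v Λ_v > Λ_h² α_v³, and define ρ_h* = Λ_h² α_v³ (γ_h + α_h)/(β_v Λ_v − Λ_h² α_v³) and M(ρ_h) = β_v Λ_v ρ_h/(Λ_h² α_v³ (γ_h + ρ_h + α_h)). Then M(ρ_h*) = 1, and M(ρ_h) ≤ 1 for all 0 ≤ ρ_h ≤ ρ_h*, with equality exactly at ρ_h = ρ_h*. -/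
/-- Threshold on the disease-induced death rate eliminating backward bifurcation: with
`ρ_h* = Λ_h² α_v³ (γ_h + α_h)/(β_v Λ_v − Λ_h² α_v³)` and
`M(ρ_h) = β_v Λ_v ρ_h/(Λ_h² α_v³ (γ_h + ρ_h + α_h))`, one has `M(ρ_h*) = 1`, and
`M(ρ_h) ≤ 1` for all `0 ≤ ρ_h ≤ ρ_h*`, with equality exactly at `ρ_h = ρ_h*`. -/
theorem sirs_malaria_death_rate_threshold
    (Λh αh γh Λv αv βv ρstar : ℝ)
    (hΛh : 0 < Λh) (hαh : 0 < αh) (hγh : 0 < γh)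
    (hΛv : 0 < Λv) (hαv : 0 < αv) (hβv : 0 < βv)
    (hcond : Λh ^ 2 * αv ^ 3 < βv * Λv)
    (hρstar : ρstar = Λh ^ 2 * αv ^ 3 * (γh + αh) / (βv * Λv - Λh ^ 2 * αv ^ 3))
    (M : ℝ → ℝ)
    (hM : ∀ ρh, M ρh = βv * Λv * ρh / (Λh ^ 2 * αv ^ 3 * (γh + ρh + αh))) :
    M ρstar = 1 ∧
      (∀ ρh, 0 ≤ ρh → ρh ≤ ρstar → M ρh ≤ 1) ∧
      (∀ ρh, 0 ≤ ρh → ρh ≤ ρstar → (M ρh = 1 ↔ ρh = ρstar)) := by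
  have hc : 0 < Λh ^ 2 * αv ^ 3 := by positivity
  have hbc : 0 < βv * Λv - Λh ^ 2 * αv ^ 3 := by linarith
  have hs : 0 < γh + αh := by linarith
  have hstar_eq : ρstar * (βv * Λv - Λh ^ 2 * αv ^ 3) = Λh ^ 2 * αv ^ 3 * (γh + αh) := by
    rw [hρstar]; field_simp
  have hρpos : 0 < ρstar := by
    rw [hρstar]; positivity
  have hden : ∀ ρh : ℝ, 0 ≤ ρh → 0 < Λh ^ 2 * αv ^ 3 * (γh + ρh + αh) := by
    intro ρh h; have : 0 < γh + ρh + αh := by linarith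
    positivity
  refine ⟨?_, ?_, ?_⟩
  · rw [hM]
    rw [div_eq_one_iff_eq (ne_of_gt (hden ρstar hρpos.le))]
    nlinarith [hstar_eq]
  · intro ρh h0 hle
    rw [hM, div_le_one (hden ρh h0)]
    nlinarith [hstar_eq, mul_le_mul_of_nonneg_right hle hbc.le]
  · intro ρh h0 hle
    rw [hM, div_eq_one_iff_eq (ne_of_gt (hden ρh h0))]
    constructor
    · intro h
      have : (ρh - ρstar) * (βv * Λv - Λh ^ 2 * αv ^ 3) = 0 := by nlinarith
      have := mul_eq_zero.mp this
      rcases this with h' | h'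
      · linarith
      · linarith
    · intro h; subst h; nlinarith [hstar_eq]
end
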